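/- arXiv:2311.11433 — 6 statements merged into one kernel-verified Lean document; each statement's English description precedes it below -/
import Mathlib

section
/- For all integers d ≥ 2 and n ≥ d², the number of partitions with fixed point satisfies the four-term recurrence f(n,d) = f(n-d+1, d) + f(n-d, d) - f(n-2d+1, d) + f(n-2d+1, d-1). -/
/-- The `d`-th largest part of a partition (1-indexed); `0` if the index is out of range. -/
def nthPart {n : ℕ} (p : n.Partition) (d : ℕ) : ℕ :=
  (p.parts.sort (· ≥ ·)).getD (d - 1) 0

/-- `f n d` is the number of partitions of `n` with fixed point `d`,
i.e. whose `d`-th largest part equals `d`. -/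
noncomputable def f (n d : ℕ) : ℕ :=
  Nat.card {p : n.Partition // nthPart p d = d}

/-!
Reading a partition `λ` with `λ_d = d` as `λ = (μ + d) ∪ {d} ∪ ν`, where `μ` is the multiset of
its `d - 1` largest parts minus `d` and `ν` the multiset of its parts after the `d`-th one, gives
`F_d := ∑ₙ f(n,d) qⁿ = q^(d²) P_{d-1} Q_d`, where `P_a` counts multisets of `a` naturals and `Q_b`
partitions into parts at most `b`, both by their sum. Splitting on `0 ∈ μ`, resp. `b ∈ ν`, gives
`(1 - qᵃ) P_a = P_{a-1}` and `(1 - qᵇ) Q_b = Q_{b-1}`. As `d² = (d-1)² + 2d - 1`, this yields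
`(1 - q^(d-1)) (1 - q^d) F_d = q^(2d-1) F_{d-1}`, whose coefficient of `qⁿ` is the recurrence.
-/

open PowerSeries Set

namespace PartitionFixedPoint

/-- Infinite level sets count as `0` (junk value of `Set.ncard`), hence the finiteness hypotheses
below. -/
noncomputable def genSeries {α : Type*} (w : α → ℕ) (S : Set α) : PowerSeries ℤ :=
  PowerSeries.mk fun n => ({x ∈ S | w x = n}.ncard : ℤ)

variable {α β : Type*}

theorem coeff_genSeries (w : α → ℕ) (S : Set α) (n : ℕ) :
    coeff n (genSeries w S) = ({x ∈ S | w x = n}.ncard : ℤ) :=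
  coeff_mk _ _

theorem genSeries_inter_add_sdiff {w : α → ℕ} {S : Set α}
    (hS : ∀ n, {x ∈ S | w x = n}.Finite) (t : Set α) :
    genSeries w (S ∩ t) + genSeries w (S \ t) = genSeries w S := by
  ext n
  have hsplit := ncard_inter_add_ncard_sdiff_eq_ncard {x ∈ S | w x = n} t (hS n)
  simp only [map_add, coeff_genSeries, ← Nat.cast_add, ← hsplit]
  congr 3 <;> ext x <;> simp only [mem_ofPred_eq, mem_inter_iff, mem_sdiff] <;> tauto

theorem genSeries_eq_X_pow_mul_of_bijOn {w : α → ℕ} {w' : β → ℕ} {S : Set α} {T : Set β}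
    {g : α → β} {k : ℕ} (hg : BijOn g S T) (hw : ∀ x ∈ S, w' (g x) = w x + k) :
    genSeries w' T = X ^ k * genSeries w S := by
  ext n
  rw [coeff_X_pow_mul', coeff_genSeries]
  split_ifs with hkn
  · have himage : {y ∈ T | w' y = n} = g '' {x ∈ S | w x = n - k} := by
      ext y
      constructor
      · rintro ⟨hy, rfl⟩
        obtain ⟨x, hx, rfl⟩ := hg.surjOn hy
        exact ⟨x, ⟨hx, by rw [hw x hx]; omega⟩, rfl⟩
      · rintro ⟨x, ⟨hx, hwx⟩, rfl⟩
        exact ⟨hg.mapsTo hx, by rw [hw x hx]; omega⟩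
    rw [himage, (hg.injOn.mono fun x hx => hx.1).ncard_image, coeff_genSeries]
  · have hempty : {y ∈ T | w' y = n} = ∅ := by
      refine eq_empty_of_forall_notMem fun y ⟨hy, hwy⟩ => ?_
      obtain ⟨x, hx, rfl⟩ := hg.surjOn hy
      rw [hw x hx] at hwy
      omega
    rw [hempty, ncard_empty, Nat.cast_zero]

theorem genSeries_prod {w₁ : α → ℕ} {w₂ : β → ℕ} {S : Set α} {T : Set β}
    (hS : ∀ n, {x ∈ S | w₁ x = n}.Finite) (hT : ∀ n, {y ∈ T | w₂ y = n}.Finite) :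
    genSeries (fun p : α × β => w₁ p.1 + w₂ p.2) (S ×ˢ T) = genSeries w₁ S * genSeries w₂ T := by
  ext n
  rw [coeff_mul, coeff_genSeries]
  have hunion : {p ∈ S ×ˢ T | w₁ p.1 + w₂ p.2 = n} =
      ⋃ ij ∈ (Finset.HasAntidiagonal.antidiagonal n : Set (ℕ × ℕ)),
        {x ∈ S | w₁ x = ij.1} ×ˢ {y ∈ T | w₂ y = ij.2} := by
    ext ⟨x, y⟩
    simp [and_assoc]
  rw [hunion, (Finset.finite_toSet _).ncard_biUnion
    (fun ij _ => (hS ij.1).prod (hT ij.2)), finsum_mem_coe_finset]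
  · simp only [coeff_genSeries, ncard_prod, Nat.cast_sum, Nat.cast_mul]
  · intro ij _ ij' _ hne
    refine disjoint_left.2 fun p hp hp' => hne (Prod.ext ?_ ?_)
    · exact hp.1.2.symm.trans hp'.1.2
    · exact hp.2.2.symm.trans hp'.2.2

theorem bijOn_cons [DecidableEq α] {c : α} {S T : Set (Multiset α)}
    (h : ∀ x, c ::ₘ x ∈ T ↔ x ∈ S) : BijOn (Multiset.cons c) S (T ∩ {y | c ∈ y}) := by
  refine ⟨fun x hx => ⟨(h x).2 hx, Multiset.mem_cons_self c x⟩,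
    fun x _ y _ hxy => (Multiset.cons_inj_right c).1 hxy, fun y ⟨hy, hc⟩ => ?_⟩
  rw [← Multiset.cons_erase hc] at hy
  exact ⟨y.erase c, (h _).1 hy, Multiset.cons_erase hc⟩

theorem sum_map_add_const (μ : Multiset ℕ) (c : ℕ) :
    (μ.map (· + c)).sum = μ.sum + Multiset.card μ * c := by
  simp [Multiset.sum_map_add]

def ofCard (a : ℕ) : Set (Multiset ℕ) := {μ | Multiset.card μ = a}

def partsLE (b : ℕ) : Set (Multiset ℕ) := {ν | ∀ i ∈ ν, 0 < i ∧ i ≤ b}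

theorem finite_setOf_pos_sum_eq (n : ℕ) :
    {ν : Multiset ℕ | (∀ i ∈ ν, 0 < i) ∧ ν.sum = n}.Finite :=
  (finite_range (Nat.Partition.parts : n.Partition → Multiset ℕ)).subset
    fun ν ⟨hpos, hsum⟩ => ⟨⟨ν, hpos _, hsum⟩, rfl⟩

theorem finite_ofCard_sum (a n : ℕ) : {μ ∈ ofCard a | μ.sum = n}.Finite := by
  refine ((finite_setOf_pos_sum_eq (n + a)).image (Multiset.map (· - 1))).subset
    fun μ ⟨hcard, hsum⟩ => ?_
  refine ⟨μ.map (· + 1), ⟨by simp, ?_⟩, by simp [Multiset.map_map]⟩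
  rw [sum_map_add_const, hsum, hcard, mul_one]

theorem finite_partsLE_sum (b n : ℕ) : {ν ∈ partsLE b | ν.sum = n}.Finite :=
  (finite_setOf_pos_sum_eq n).subset fun _ ⟨h, hsum⟩ => ⟨fun i hi => (h i hi).1, hsum⟩

theorem genSeries_ofCard_succ (a : ℕ) :
    genSeries Multiset.sum (ofCard (a + 1)) =
      genSeries Multiset.sum (ofCard a) +
        X ^ (a + 1) * genSeries Multiset.sum (ofCard (a + 1)) := by
  have hzero : genSeries Multiset.sum (ofCard (a + 1) ∩ {μ | 0 ∈ μ}) =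
      genSeries Multiset.sum (ofCard a) := by
    simpa using genSeries_eq_X_pow_mul_of_bijOn (k := 0)
      (bijOn_cons (c := 0) fun μ => by simp [ofCard]) fun μ _ => by simp
  have hshift : BijOn (Multiset.map (· + 1)) (ofCard (a + 1)) (ofCard (a + 1) \ {μ | 0 ∈ μ}) := by
    refine ⟨fun μ hμ => ⟨by simpa [ofCard] using hμ, by simp⟩,
      (Multiset.map_injective (add_left_injective 1)).injOn, fun μ ⟨hμ, h0⟩ => ?_⟩
    refine ⟨μ.map (· - 1), by simpa [ofCard] using hμ, ?_⟩
    rw [Multiset.map_map]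
    refine (Multiset.map_congr rfl fun i hi => ?_).trans (Multiset.map_id μ)
    have : i ≠ 0 := fun h => h0 (h ▸ hi)
    simp only [Function.comp_apply, id_eq]
    omega
  rw [← hzero, ← genSeries_eq_X_pow_mul_of_bijOn (w := Multiset.sum) (w' := Multiset.sum) hshift
    fun μ hμ => by rw [sum_map_add_const, hμ, mul_one],
    genSeries_inter_add_sdiff (finite_ofCard_sum (a + 1))]

theorem genSeries_partsLE_succ (b : ℕ) :
    genSeries Multiset.sum (partsLE (b + 1)) =
      genSeries Multiset.sum (partsLE b) +
        X ^ (b + 1) * genSeries Multiset.sum (partsLE (b + 1)) := by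
  have hsdiff : partsLE (b + 1) \ {ν | b + 1 ∈ ν} = partsLE b := by
    ext ν
    simp only [partsLE, mem_sdiff, mem_ofPred_eq]
    refine ⟨fun ⟨h, hb⟩ i hi => ⟨(h i hi).1, ?_⟩, fun h => ⟨fun i hi => ?_, fun hb => ?_⟩⟩
    · have := (h i hi).2
      have : i ≠ b + 1 := fun e => hb (e ▸ hi)
      omega
    · exact ⟨(h i hi).1, by have := (h i hi).2; omega⟩
    · have := (h _ hb).2; omega
  have hinter := genSeries_eq_X_pow_mul_of_bijOn (w := Multiset.sum) (w' := Multiset.sum)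
    (bijOn_cons (c := b + 1) (S := partsLE (b + 1)) (T := partsLE (b + 1))
      fun ν => by simp [partsLE]) (k := b + 1) fun ν _ => by simp [add_comm]
  rw [← hinter, ← hsdiff, ← genSeries_inter_add_sdiff (finite_partsLE_sum (b + 1)) {ν | b + 1 ∈ ν},
    add_comm]

def fixedPointParts (d : ℕ) : Set (Multiset ℕ) :=
  {s | (∀ i ∈ s, 0 < i) ∧ (s.sort (· ≥ ·)).getD (d - 1) 0 = d}

def assemble (d : ℕ) (x : Multiset ℕ × Multiset ℕ) : Multiset ℕ :=
  x.1.map (· + d) + d ::ₘ x.2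

def decompose (d : ℕ) (s : Multiset ℕ) : Multiset ℕ × Multiset ℕ :=
  (((s.sort (· ≥ ·)).take (d - 1)).map (· - d), (s.sort (· ≥ ·)).drop d)

theorem sum_assemble (d : ℕ) {x : Multiset ℕ × Multiset ℕ} (hx : Multiset.card x.1 = d - 1) :
    (assemble d x).sum = x.1.sum + x.2.sum + d * d := by
  have hd : (d - 1) * d + d = d * d := by cases d <;> simp [add_mul]
  rw [assemble, Multiset.sum_add, Multiset.sum_cons, sum_map_add_const, hx]
  linarith

theorem sort_assemble {d : ℕ} {x : Multiset ℕ × Multiset ℕ} (hx : ∀ i ∈ x.2, i ≤ d) :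
    (assemble d x).sort (· ≥ ·) = (x.1.sort (· ≥ ·)).map (· + d) ++ d :: x.2.sort (· ≥ ·) := by
  refine List.Perm.eq_of_pairwise' (Multiset.pairwise_sort _ _) ?_ ?_
  · rw [List.pairwise_append, List.pairwise_map, List.pairwise_cons]
    refine ⟨(Multiset.pairwise_sort _ _).imp fun h => by omega,
      ⟨fun i hi => hx i (by simpa using hi), Multiset.pairwise_sort _ _⟩, ?_⟩
    simp only [List.mem_map, List.mem_cons, Multiset.mem_sort]
    rintro _ ⟨i, -, rfl⟩ j (rfl | hj)
    · omega
    · have := hx j hj; omega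
  · rw [← Multiset.coe_eq_coe, ← Multiset.coe_add, ← Multiset.cons_coe, ← Multiset.map_coe,
      Multiset.sort_eq, Multiset.sort_eq, Multiset.sort_eq]
    rfl

theorem bounds_of_sort_eq {d : ℕ} {s : Multiset ℕ} {L₁ L₂ : List ℕ}
    (h : s.sort (· ≥ ·) = L₁ ++ d :: L₂) : (∀ a ∈ L₁, d ≤ a) ∧ ∀ b ∈ L₂, b ≤ d := by
  have hsorted := Multiset.pairwise_sort s (· ≥ ·)
  rw [h, List.pairwise_append, List.pairwise_cons] at hsorted
  exact ⟨fun a ha => hsorted.2.2 a ha d List.mem_cons_self, hsorted.2.1.1⟩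

theorem mem_fixedPointParts_iff {d : ℕ} (hd : 1 ≤ d) {s : Multiset ℕ} :
    s ∈ fixedPointParts d ↔ (∀ i ∈ s, 0 < i) ∧
      ∃ L₁ L₂ : List ℕ, L₁.length = d - 1 ∧ s.sort (· ≥ ·) = L₁ ++ d :: L₂ := by
  refine and_congr_right fun _ => ⟨fun h => ?_, ?_⟩
  · set L := s.sort (· ≥ ·)
    have hlen : d - 1 < L.length := by
      by_contra! hle
      rw [List.getD_eq_default _ _ hle] at h
      omega
    refine ⟨L.take (d - 1), L.drop d, by rw [List.length_take]; omega, ?_⟩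
    rw [List.getD_eq_getElem _ _ hlen] at h
    conv_lhs => rw [← List.take_append_drop (d - 1) L, List.drop_eq_getElem_cons hlen]
    rw [h, show d - 1 + 1 = d by omega]
  · rintro ⟨L₁, L₂, hL, h⟩
    rw [h, List.getD_append_right _ _ _ _ hL.le, hL, Nat.sub_self, List.getD_cons_zero]

theorem decompose_of_sort_eq {d : ℕ} (hd : 1 ≤ d) {s : Multiset ℕ} {L₁ L₂ : List ℕ}
    (hL : L₁.length = d - 1) (h : s.sort (· ≥ ·) = L₁ ++ d :: L₂) :
    decompose d s = (↑(L₁.map (· - d)), ↑L₂) := by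
  obtain ⟨e, rfl⟩ : ∃ e, d = e + 1 := ⟨d - 1, by omega⟩
  simp only [Nat.add_sub_cancel] at hL
  simp [decompose, h, ← hL]

theorem bijOn_assemble {d : ℕ} (hd : 1 ≤ d) :
    BijOn (assemble d) (ofCard (d - 1) ×ˢ partsLE d) (fixedPointParts d) := by
  have hsort : ∀ x ∈ ofCard (d - 1) ×ˢ partsLE d, (assemble d x).sort (· ≥ ·) =
      (x.1.sort (· ≥ ·)).map (· + d) ++ d :: x.2.sort (· ≥ ·) :=
    fun x hx => sort_assemble fun i hi => (hx.2 i hi).2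
  refine InvOn.bijOn (f' := decompose d) ⟨fun x hx => ?_, fun s hs => ?_⟩ (fun x hx => ?_)
    (fun s hs => ?_)
  · rw [decompose_of_sort_eq hd (by simpa using hx.1.out) (hsort x hx)]
    simp [List.map_map, Function.comp_def]
  · obtain ⟨-, L₁, L₂, hL, h⟩ := (mem_fixedPointParts_iff hd).1 hs
    rw [decompose_of_sort_eq hd hL h]
    have hL₁ : (L₁.map (· - d)).map (· + d) = L₁ := by
      rw [List.map_map]
      refine (List.map_congr_left fun a ha => ?_).trans (List.map_id L₁)
      have := (bounds_of_sort_eq h).1 a ha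
      simp only [Function.comp_apply, id_eq]
      omega
    rw [← Multiset.sort_eq s (· ≥ ·), h]
    simp only [assemble, Multiset.map_coe, hL₁, Multiset.cons_coe, Multiset.coe_add]
  · refine (mem_fixedPointParts_iff hd).2 ⟨?_, _, _, by simpa using hx.1.out, hsort x hx⟩
    simp only [assemble, Multiset.mem_add, Multiset.mem_map, Multiset.mem_cons]
    rintro i (⟨j, -, hj⟩ | hi | hi)
    · omega
    · omega
    · exact (hx.2 i hi).1
  · obtain ⟨hpos, L₁, L₂, hL, h⟩ := (mem_fixedPointParts_iff hd).1 hs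
    rw [decompose_of_sort_eq hd hL h]
    refine ⟨by simpa [ofCard] using hL, fun i hi => ⟨hpos i ?_, (bounds_of_sort_eq h).2 i hi⟩⟩
    rw [← Multiset.mem_sort (· ≥ ·), h]
    exact List.mem_append_right _ (List.mem_cons_of_mem _ hi)

theorem genSeries_fixedPointParts {d : ℕ} (hd : 1 ≤ d) :
    genSeries Multiset.sum (fixedPointParts d) = X ^ (d * d) *
      (genSeries Multiset.sum (ofCard (d - 1)) * genSeries Multiset.sum (partsLE d)) := by
  rw [genSeries_eq_X_pow_mul_of_bijOn (w := fun x => x.1.sum + x.2.sum) (bijOn_assemble hd)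
      fun x hx => sum_assemble d hx.1,
    genSeries_prod (finite_ofCard_sum (d - 1)) (finite_partsLE_sum d)]

theorem coeff_genSeries_fixedPointParts (n d : ℕ) :
    coeff n (genSeries Multiset.sum (fixedPointParts d)) = f n d := by
  rw [coeff_genSeries, f, ← Nat.card_coe_set_eq]
  congr 1
  exact Nat.card_congr
    { toFun s := ⟨⟨s.1, fun hi => s.2.1.1 _ hi, s.2.2⟩, s.2.1.2⟩
      invFun p := ⟨p.1.parts, ⟨fun i hi => p.1.parts_pos hi, p.2⟩, p.1.parts_sum⟩
      left_inv _ := rfl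
      right_inv _ := rfl }

theorem genSeries_fixedPointParts_recurrence (c : ℕ) :
    (1 - X ^ (c + 1)) * (1 - X ^ (c + 2)) * genSeries Multiset.sum (fixedPointParts (c + 2)) =
      X ^ (2 * c + 3) * genSeries Multiset.sum (fixedPointParts (c + 1)) := by
  rw [genSeries_fixedPointParts (by omega), genSeries_fixedPointParts (by omega),
    show (c + 2) * (c + 2) = 2 * c + 3 + (c + 1) * (c + 1) by ring, pow_add]
  have hP := genSeries_ofCard_succ c
  have hQ := genSeries_partsLE_succ (c + 1)
  simp only [Nat.add_sub_cancel, show c + 2 - 1 = c + 1 from rfl]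
  linear_combination (X ^ (2 * c + 3) * X ^ ((c + 1) * (c + 1)) * (1 - X ^ (c + 2)) *
      genSeries Multiset.sum (partsLE (c + 2))) * hP +
    (X ^ (2 * c + 3) * X ^ ((c + 1) * (c + 1)) * genSeries Multiset.sum (ofCard c)) * hQ

end PartitionFixedPoint

open PartitionFixedPoint

/-- For integers `d ≥ 2` and `n ≥ d²`,
`f(n,d) = f(n-d+1,d) + f(n-d,d) - f(n-2d+1,d) + f(n-2d+1,d-1)`. -/
theorem fixed_point_four_term_recurrence (d n : ℕ) (hd : 2 ≤ d) (hn : d ^ 2 ≤ n) :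
    (f n d : ℤ) = f (n - d + 1) d + f (n - d) d - f (n - 2 * d + 1) d
      + f (n - 2 * d + 1) (d - 1) := by
  obtain ⟨c, rfl⟩ : ∃ c, d = c + 2 := ⟨d - 2, by omega⟩
  have hlarge : 2 * (c + 2) ≤ n := by nlinarith
  have hcoeff := congrArg (coeff n) (genSeries_fixedPointParts_recurrence c)
  rw [show ∀ F : ℤ⟦X⟧, (1 - X ^ (c + 1)) * (1 - X ^ (c + 2)) * F =
      F - X ^ (c + 1) * F - X ^ (c + 2) * F + X ^ (2 * c + 3) * F from fun F => by ring] at hcoeff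
  simp only [map_add, map_sub, coeff_X_pow_mul', coeff_genSeries_fixedPointParts,
    if_pos (show c + 1 ≤ n by omega), if_pos (show c + 2 ≤ n by omega),
    if_pos (show 2 * c + 3 ≤ n by omega)] at hcoeff
  rw [show n - (c + 2) + 1 = n - (c + 1) by omega,
    show n - 2 * (c + 2) + 1 = n - (2 * c + 3) by omega, show c + 2 - 1 = c + 1 from rfl]
  linarith
end

section
/- For every n ≥ 1, the diagonal sum f(n,1) + f(n-1,2) + f(n-2,3) + ⋯ (i.e., the sum over all d ≥ 1 of f(n+1-d, d)) equals a(n+1), the number of partitions of n+1 whose Durfee square size is not a part. -/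
/-- The size of the Durfee square of a partition: the greatest index `i` with `λ_i ≥ i`. -/
noncomputable def durfee {n : ℕ} (p : n.Partition) : ℕ :=
  sSup {i : ℕ | i ≤ nthPart p i}
/-- `a n` is the number of partitions of `n` whose Durfee square size is not a part. -/
noncomputable def a (n : ℕ) : ℕ :=
  Nat.card {l : n.Partition // durfee l ∉ l.parts}

/-!
Write `λ.countGE k` for the number of parts of `λ` that are `≥ k`, so that
`k ≤ λ_i ↔ i ≤ λ.countGE k` and the conjugate partition `λ'` has `λ'_k = λ.countGE k`.

Adding a part `d` to a partition of `n + 1 - d` with fixed point `d` is a bijection onto the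
partitions `ν` of `n + 1` with `ν_d = ν_{d+1} = d`, i.e. with at least `d + 1` parts `≥ d` and
fewer than `d` parts `≥ d + 1`. Conjugation carries these onto the partitions with exactly `d`
parts `≥ d` and exactly `d` parts `≥ d + 1`, which are the partitions with Durfee square of size
`d` that do not have `d` as a part. Summing over `d` gives `a (n + 1)`.
-/

theorem List.le_getD_iff_lt_countP {l : List ℕ} (hl : l.Pairwise (· ≥ ·)) {k : ℕ}
    (hk : 0 < k) (i : ℕ) : k ≤ l.getD i 0 ↔ i < l.countP (k ≤ ·) := by
  induction l generalizing i with
  | nil => simp only [List.getD_nil, List.countP_nil]; omega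
  | cons a t ih =>
    rw [List.pairwise_cons] at hl
    by_cases hka : k ≤ a
    · cases i <;> simp [hka, ← ih hl.2]
    · have hlt : ∀ x ∈ a :: t, x < k := List.forall_mem_cons.2
        ⟨not_le.1 hka, fun x hx => (hl.1 x hx).trans_lt (not_le.1 hka)⟩
      have hget : (a :: t).getD i 0 < k := by
        rw [List.getD_eq_getElem?_getD]
        cases h : (a :: t)[i]? with
        | none => exact hk
        | some x => exact hlt x (List.mem_of_getElem? h)
      have hcount : (a :: t).countP (k ≤ ·) = 0 := List.countP_eq_zero.2 (by simpa using hlt)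
      omega

namespace Nat.Partition

open Finset

variable {m : ℕ}

def countGE (p : m.Partition) (k : ℕ) : ℕ := p.parts.countP (k ≤ ·)

theorem le_nthPart_iff_le_countGE (p : m.Partition) {d k : ℕ} (hd : 0 < d) (hk : 0 < k) :
    k ≤ nthPart p d ↔ d ≤ p.countGE k := by
  rw [nthPart, List.le_getD_iff_lt_countP (Multiset.pairwise_sort _ _) hk,
    ← Multiset.coe_countP, Multiset.sort_eq]
  change d - 1 < p.countGE k ↔ _
  omega

theorem nthPart_eq_self_iff (p : m.Partition) {d : ℕ} (hd : 0 < d) :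
    nthPart p d = d ↔ d ≤ p.countGE d ∧ p.countGE (d + 1) < d := by
  have := p.le_nthPart_iff_le_countGE hd hd
  have := p.le_nthPart_iff_le_countGE (k := d + 1) hd (by omega)
  omega

theorem countGE_antitone (p : m.Partition) : Antitone p.countGE := fun j k hjk => by
  simp only [countGE, Multiset.countP_eq_card_filter]
  exact Multiset.card_le_card (Multiset.monotone_filter_right _ fun x hx => hjk.trans hx)

theorem countGE_eq_zero_of_lt (p : m.Partition) {k : ℕ} (hk : m < k) : p.countGE k = 0 :=
  Multiset.countP_eq_zero.2 fun x hx hkx => by have := le_of_mem_parts hx; omega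

theorem countGE_eq_countGE_succ_add_count (p : m.Partition) (k : ℕ) :
    p.countGE k = p.countGE (k + 1) + p.parts.count k := by
  simp only [countGE]
  induction p.parts using Multiset.induction_on with
  | empty => simp
  | cons a s ih =>
    simp only [Multiset.countP_cons, Multiset.count_cons]
    split_ifs <;> omega

theorem mem_parts_iff_countGE_succ_lt (p : m.Partition) (k : ℕ) :
    k ∈ p.parts ↔ p.countGE (k + 1) < p.countGE k := by
  rw [← Multiset.count_pos, countGE_eq_countGE_succ_add_count p k]
  omega

theorem ext_countGE {p q : m.Partition} (h : ∀ k, 0 < k → p.countGE k = q.countGE k) :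
    p = q := by
  refine Nat.Partition.ext (Multiset.ext.2 fun k => ?_)
  rcases k.eq_zero_or_pos with rfl | hk
  · rw [Multiset.count_eq_zero.2 fun h => (p.parts_pos h).ne rfl,
      Multiset.count_eq_zero.2 fun h => (q.parts_pos h).ne rfl]
  · have hp := countGE_eq_countGE_succ_add_count p k
    have hq := countGE_eq_countGE_succ_add_count q k
    have := h k hk
    have := h (k + 1) k.succ_pos
    omega

theorem sum_countGE (p : m.Partition) : ∑ k ∈ Icc 1 m, p.countGE k = m := by
  suffices ∀ s : Multiset ℕ, (∀ x ∈ s, x ≤ m) →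
      ∑ k ∈ Icc 1 m, s.countP (k ≤ ·) = s.sum by
    simpa only [countGE, p.parts_sum] using this p.parts fun x => le_of_mem_parts
  intro s hs
  induction s using Multiset.induction_on with
  | empty => simp
  | cons a s ih =>
    have hIcc : {k ∈ Icc 1 m | k ≤ a} = Icc 1 a := by
      ext k
      simp only [mem_filter, mem_Icc]
      have := hs a (Multiset.mem_cons_self a s)
      omega
    simp only [Multiset.countP_cons, sum_add_distrib, sum_boole, hIcc,
      ih fun x hx => hs x (Multiset.mem_cons_of_mem hx), Multiset.sum_cons]
    simp [add_comm]

def conj (p : m.Partition) : m.Partition :=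
  ofSums m ((Icc 1 m).val.map p.countGE) (by rw [← sum_eq_multiset_sum, sum_countGE])

theorem countGE_conj (p : m.Partition) {k : ℕ} (hk : 0 < k) :
    p.conj.countGE k = #{j ∈ Icc 1 m | k ≤ p.countGE j} := by
  simp only [countGE, conj, ofSums_parts, Multiset.countP_filter, Multiset.countP_map]
  exact congrArg Multiset.card (Multiset.filter_congr fun j _ => and_iff_left_of_imp (by omega))

theorem le_countGE_conj_iff (p : m.Partition) {i k : ℕ} (hi : 0 < i) (hk : 0 < k) :
    i ≤ p.conj.countGE k ↔ k ≤ p.countGE i := by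
  rw [countGE_conj p hk]
  constructor
  · intro h
    by_contra! hlt
    have hsub : {j ∈ Icc 1 m | k ≤ p.countGE j} ⊆ Ico 1 i := fun j hj => by
      simp only [mem_filter, mem_Icc, mem_Ico] at hj ⊢
      have := fun hij : i ≤ j => p.countGE_antitone hij
      omega
    have := card_le_card hsub
    simp only [Nat.card_Ico] at this
    omega
  · intro h
    have him : i ≤ m := by
      by_contra! hmi
      have := p.countGE_eq_zero_of_lt hmi
      omega
    have hsub : Icc 1 i ⊆ {j ∈ Icc 1 m | k ≤ p.countGE j} := fun j hj => by
      simp only [mem_filter, mem_Icc] at hj ⊢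
      exact ⟨⟨hj.1, hj.2.trans him⟩, h.trans (p.countGE_antitone hj.2)⟩
    simpa using card_le_card hsub

theorem conj_involutive : Function.Involutive (conj (m := m)) := fun p =>
  ext_countGE fun k hk => eq_of_forall_le_iff fun i => by
    rcases i.eq_zero_or_pos with rfl | hi
    · simp
    · rw [le_countGE_conj_iff _ hi hk, le_countGE_conj_iff _ hk hi]

theorem conj_countGE_eq_iff (p : m.Partition) {d : ℕ} (hd : 0 < d) :
    d + 1 ≤ p.countGE d ∧ p.countGE (d + 1) < d ↔
      p.conj.countGE d = d ∧ p.conj.countGE (d + 1) = d := by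
  have := p.le_countGE_conj_iff hd hd
  have := p.le_countGE_conj_iff (i := d + 1) (k := d) (by omega) hd
  have := p.le_countGE_conj_iff (i := d) (k := d + 1) hd (by omega)
  have := p.le_countGE_conj_iff (i := d + 1) (k := d + 1) (by omega) (by omega)
  omega

theorem le_of_le_nthPart (p : m.Partition) {i : ℕ} (h : i ≤ nthPart p i) : i ≤ m := by
  rcases i.eq_zero_or_pos with rfl | hi
  · exact m.zero_le
  by_contra! hmi
  have := (p.le_nthPart_iff_le_countGE hi hi).1 h
  rw [p.countGE_eq_zero_of_lt hmi] at this
  omega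

theorem bddAbove_durfee (p : m.Partition) : BddAbove {i | i ≤ nthPart p i} :=
  ⟨m, fun _ => p.le_of_le_nthPart⟩

theorem durfee_le (p : m.Partition) : durfee p ≤ m :=
  csSup_le ⟨0, Nat.zero_le _⟩ fun _ => p.le_of_le_nthPart

theorem durfee_pos (p : m.Partition) (hm : 0 < m) : 0 < durfee p := by
  obtain ⟨x, hx⟩ := Multiset.exists_mem_of_ne_zero fun h : p.parts = 0 => by
    simpa [h, hm.ne] using p.parts_sum
  have : 1 ≤ nthPart p 1 := (p.le_nthPart_iff_le_countGE one_pos one_pos).2 <|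
    Multiset.countP_pos.2 ⟨x, hx, p.parts_pos hx⟩
  exact le_csSup p.bddAbove_durfee this

theorem durfee_eq_iff (p : m.Partition) {d : ℕ} (hd : 0 < d) :
    durfee p = d ↔ d ≤ p.countGE d ∧ p.countGE (d + 1) ≤ d := by
  have hmem : ∀ {i}, 0 < i → (i ∈ {i | i ≤ nthPart p i} ↔ i ≤ p.countGE i) :=
    fun hi => p.le_nthPart_iff_le_countGE hi hi
  constructor
  · rintro rfl
    refine ⟨(hmem hd).1 (Nat.sSup_mem ⟨0, Nat.zero_le _⟩ p.bddAbove_durfee), ?_⟩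
    by_contra! h
    have := le_csSup p.bddAbove_durfee ((hmem (by omega)).2 h)
    exact (durfee p).lt_succ_self.not_ge this
  · rintro ⟨hd_le, hd_succ⟩
    refine IsGreatest.csSup_eq ⟨(hmem hd).2 hd_le, fun i hi => ?_⟩
    by_contra! hdi
    have := (hmem (by omega)).1 hi
    have := p.countGE_antitone (show d + 1 ≤ i by omega)
    omega

theorem durfee_notMem_and_eq_iff (p : m.Partition) {d : ℕ} (hd : 0 < d) :
    durfee p ∉ p.parts ∧ durfee p = d ↔ p.countGE d = d ∧ p.countGE (d + 1) = d := by
  have := p.countGE_antitone d.le_succ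
  constructor
  · rintro ⟨hnot, heq⟩
    rw [heq, mem_parts_iff_countGE_succ_lt] at hnot
    have := (p.durfee_eq_iff hd).1 heq
    omega
  · rintro ⟨h, h_succ⟩
    have heq := (p.durfee_eq_iff hd).2 ⟨h.ge, h_succ.le⟩
    refine ⟨?_, heq⟩
    rw [heq, mem_parts_iff_countGE_succ_lt]
    omega

theorem countGE_partitionWithPartEquiv_symm {n d : ℕ} (hd : 0 < d) (hdn : d ≤ n)
    (μ : (n - d).Partition) (k : ℕ) :
    ((partitionWithPartEquiv hd hdn).symm μ).1.countGE k =
      μ.countGE k + if k ≤ d then 1 else 0 := by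
  rw [countGE, partitionWithPartEquiv_symm_apply_parts, Multiset.countP_cons, countGE]

theorem f_sub_eq_card {n d : ℕ} (hd : 0 < d) (hdn : d ≤ n) :
    f (n - d) d = Nat.card {l : n.Partition // l.countGE d = d ∧ l.countGE (d + 1) = d} := by
  refine Nat.card_congr (((partitionWithPartEquiv hd hdn).symm.subtypeEquiv fun μ => ?_).trans
    ((Equiv.subtypeSubtypeEquivSubtype fun hν => ?_).trans
    ((conj_involutive.toPerm _).subtypeEquiv fun ν => conj_countGE_eq_iff ν hd)))
  · rw [nthPart_eq_self_iff μ hd, countGE_partitionWithPartEquiv_symm,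
      countGE_partitionWithPartEquiv_symm, if_pos le_rfl, if_neg (by omega)]
    omega
  · rw [mem_parts_iff_countGE_succ_lt]
    omega

end Nat.Partition

theorem diagonal_sum_eq_general (n : ℕ) :
    ∑ d ∈ Finset.Icc 1 (n + 1), f (n + 1 - d) d = a (n + 1) := by
  classical
  have hdurfee : ∀ l ∈ ({l | durfee l ∉ l.parts} : Finset (n + 1).Partition),
      durfee l ∈ Finset.Icc 1 (n + 1) :=
    fun l _ => Finset.mem_Icc.2 ⟨l.durfee_pos n.succ_pos, l.durfee_le⟩
  rw [a, Nat.card_eq_fintype_card, Fintype.card_subtype,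
    Finset.card_eq_sum_card_fiberwise hdurfee]
  refine Finset.sum_congr rfl fun d hd => ?_
  have hd := Finset.mem_Icc.1 hd
  rw [Nat.Partition.f_sub_eq_card hd.1 hd.2, Nat.card_eq_fintype_card, Fintype.card_subtype,
    Finset.filter_filter]
  simp_rw [Nat.Partition.durfee_notMem_and_eq_iff _ hd.1]

/-- For `n ≥ 1`, the diagonal sum `∑_{d ≥ 1} f(n+1-d, d)` equals `a(n+1)`.
(The terms with `d > n+1` vanish, so the sum is truncated at `d = n+1`.) -/
theorem diagonal_sum_eq (n : ℕ) (hn : 1 ≤ n) :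
    ∑ d ∈ Finset.Icc 1 (n + 1), f (n + 1 - d) d = a (n + 1) :=
  diagonal_sum_eq_general n
end

section
/- For every n ≥ 1, the antidiagonal sum f(n,1) + f(n+1,2) + f(n+2,3) + ⋯ (i.e., the sum over all d ≥ 1 of f(n-1+d, d)) equals p(n-1), the number of partitions of n-1. -/
/-- `p n` is the number of partitions of `n` (with `p 0 = 1`). -/
noncomputable def numPartitions (n : ℕ) : ℕ := Nat.card (Nat.Partition n)

theorem Multiset.countP_lt_antitone (s : Multiset ℕ) : Antitone fun e => s.countP (e < ·) := by
  intro a b hab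
  simp only [Multiset.countP_eq_card_filter]
  exact Multiset.card_le_card (Multiset.monotone_filter_right s fun x hx => by omega)

theorem le_nthPart_iff {n : ℕ} (p : n.Partition) {k d : ℕ} (hk : 0 < k) (hd : 0 < d) :
    k ≤ nthPart p d ↔ d ≤ p.parts.countP (k ≤ ·) := by
  rw [nthPart, List.le_getD_iff_lt_countP (p.parts.pairwise_sort _) hk,
    ← Multiset.coe_countP, Multiset.sort_eq, Nat.lt_iff_add_one_le, Nat.sub_add_cancel hd]

theorem nthPart_eq_self_iff {n : ℕ} (p : n.Partition) {d : ℕ} (hd : 0 < d) :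
    nthPart p d = d ↔ d ≤ p.parts.countP (d ≤ ·) ∧ p.parts.countP (d < ·) < d := by
  have hsucc : d + 1 ≤ nthPart p d ↔ d ≤ p.parts.countP (d < ·) := le_nthPart_iff p d.succ_pos hd
  rw [← le_nthPart_iff p hd hd, ← not_le, ← hsucc]
  omega

theorem mem_parts_of_nthPart_eq_self {n : ℕ} {p : n.Partition} {d : ℕ} (hd : 0 < d)
    (h : nthPart p d = d) : d ∈ p.parts := by
  obtain ⟨hle, hlt⟩ := (nthPart_eq_self_iff p hd).1 h
  by_contra hmem
  have : p.parts.countP (d ≤ ·) = p.parts.countP (d < ·) :=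
    Multiset.countP_congr rfl fun x hx => by
      have : x ≠ d := fun hxd => hmem (hxd ▸ hx)
      simp only [eq_iff_iff]; omega
  omega

theorem Multiset.exists_countP_lt (s : Multiset ℕ) : ∃ d, s.countP (d < ·) < d :=
  ⟨_, Nat.lt_succ_of_le (s.countP_le_card _)⟩

/-- The unique `d` such that adding a part `d` to `μ` makes `d` a fixed point
(see `nthPart_cons_eq_self_iff`). -/
noncomputable def insertionFixedPoint {m : ℕ} (μ : m.Partition) : ℕ :=
  Nat.find μ.parts.exists_countP_lt

theorem insertionFixedPoint_pos {m : ℕ} (μ : m.Partition) : 0 < insertionFixedPoint μ :=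
  Nat.zero_lt_of_lt (Nat.find_spec μ.parts.exists_countP_lt)

theorem insertionFixedPoint_le {m : ℕ} (μ : m.Partition) : insertionFixedPoint μ ≤ m + 1 :=
  Nat.find_min' _ <| by
    rw [Multiset.countP_eq_zero.2 fun x hx => by have := μ.le_of_mem_parts hx; omega]
    omega

theorem insertionFixedPoint_eq_iff {m : ℕ} (μ : m.Partition) {d : ℕ} (hd : 0 < d) :
    insertionFixedPoint μ = d ↔
      μ.parts.countP (d < ·) < d ∧ d ≤ μ.parts.countP (d ≤ ·) + 1 := by
  have hprev : μ.parts.countP (d ≤ ·) = μ.parts.countP (d - 1 < ·) :=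
    Multiset.countP_congr rfl fun x _ => by simp only [eq_iff_iff]; omega
  rw [insertionFixedPoint, Nat.find_eq_iff, hprev]
  refine and_congr_right fun _ => ⟨fun h => ?_, fun h e he => ?_⟩
  · have := h (d - 1) (by omega)
    omega
  · have := μ.parts.countP_lt_antitone (show e ≤ d - 1 by omega)
    simp only at this
    omega

theorem nthPart_cons_eq_self_iff {n d : ℕ} (hd : 0 < d) (hdn : d ≤ n) (q : (n - d).Partition) :
    nthPart ((Nat.Partition.partitionWithPartEquiv hd hdn).symm q).1 d = d ↔
      insertionFixedPoint q = d := by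
  rw [nthPart_eq_self_iff _ hd, Nat.Partition.partitionWithPartEquiv_symm_apply_parts,
    Multiset.countP_cons_of_pos _ le_rfl, Multiset.countP_cons_of_neg _ (lt_irrefl d),
    insertionFixedPoint_eq_iff q hd, and_comm]

theorem f_eq_card_insertionFixedPoint_eq {n d : ℕ} (hd : 0 < d) (hdn : d ≤ n) :
    f n d = Nat.card {q : (n - d).Partition // insertionFixedPoint q = d} :=
  Nat.card_congr <|
    (Equiv.subtypeSubtypeEquivSubtype (mem_parts_of_nthPart_eq_self hd)).symm.trans
      ((Nat.Partition.partitionWithPartEquiv hd hdn).symm.subtypeEquiv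
        fun q => (nthPart_cons_eq_self_iff hd hdn q).symm).symm

/-- The terms with `d > n` vanish, so the sum is truncated at `d = n`. -/
theorem antidiagonal_sum_eq (n : ℕ) (hn : 1 ≤ n) :
    ∑ d ∈ Finset.Icc 1 n, f (n - 1 + d) d = numPartitions (n - 1) := by
  have hfiber (d : ℕ) (hd : d ∈ Finset.Icc 1 n) :
      f (n - 1 + d) d =
        (Finset.univ.filter fun q : (n - 1).Partition => insertionFixedPoint q = d).card := by
    rw [f_eq_card_insertionFixedPoint_eq (Finset.mem_Icc.1 hd).1 (Nat.le_add_left d _),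
      Nat.add_sub_cancel, Nat.card_eq_fintype_card, Fintype.card_subtype]
  have hmaps : Set.MapsTo insertionFixedPoint
      ((Finset.univ : Finset (n - 1).Partition) : Set _) (Finset.Icc 1 n) :=
    fun (q : (n - 1).Partition) _ =>
      Finset.mem_Icc.2 ⟨insertionFixedPoint_pos q, by grind [insertionFixedPoint_le q]⟩
  rw [Finset.sum_congr rfl hfiber, numPartitions, Nat.card_eq_fintype_card, ← Finset.card_univ,
    Finset.card_eq_sum_card_fiberwise hmaps]
end

section
/- The column sequence f(n,2) satisfies the linear recurrence f(n,2) = 2 f(n-1,2) - 2 f(n-3,2) + f(n-4,2) for all n ≥ 5, with initial values f(1,2) = f(2,2) = f(3,2) = 0 and f(4,2) = 1. -/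
/-! A partition of `n` whose second largest part is `2` has the shape `a, 2, 2^k, 1^m` with
`a ≥ 2`, so it is determined by the pair `(a, k)` subject to `a + 2k + 2 ≤ n`. Going from `n` to
`n + 1` adds exactly the pairs with `a + 2k + 2 = n + 1`, of which there are `⌊(n - 1)/2⌋`.
These increments grow by one every two steps, so `f(n,2) - f(n-1,2) - f(n-2,2) + f(n-3,2) = 1`
for `n ≥ 4`, and subtracting two consecutive instances gives the recurrence. -/

open Multiset

theorem Multiset.eq_replicate_add_replicate {α : Type*} [DecidableEq α] {s : Multiset α}
    {x y : α} (hxy : x ≠ y) (h : ∀ z ∈ s, z = x ∨ z = y) :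
    s = replicate (s.count x) x + replicate (s.count y) y := by
  have hfilter : s.filter (¬ · = x) = s.filter (· = y) :=
    filter_congr fun z hz => by rcases h z hz with rfl | rfl <;> simp [hxy, hxy.symm]
  rw [← filter_eq', ← filter_eq', ← hfilter, filter_add_not]

def shapeParts (a k m : ℕ) : Multiset ℕ :=
  a ::ₘ 2 ::ₘ (replicate k 2 + replicate m 1)

lemma sum_shapeParts (a k m : ℕ) : (shapeParts a k m).sum = a + 2 * k + m + 2 := by
  simp [shapeParts]
  ring

lemma card_shapeParts (a k m : ℕ) : card (shapeParts a k m) = k + m + 2 := by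
  simp [shapeParts]

lemma count_one_shapeParts {a : ℕ} (ha : 2 ≤ a) (k m : ℕ) :
    count 1 (shapeParts a k m) = m := by
  simp [shapeParts, count_cons, count_replicate]
  omega

lemma shapeParts_inj {a k m a' k' m' : ℕ} (ha : 2 ≤ a) (ha' : 2 ≤ a')
    (h : shapeParts a k m = shapeParts a' k' m') : a = a' ∧ k = k' ∧ m = m' := by
  have hsum := congrArg sum h
  have hcard := congrArg card h
  have hones := congrArg (count 1) h
  rw [sum_shapeParts, sum_shapeParts] at hsum
  rw [card_shapeParts, card_shapeParts] at hcard
  rw [count_one_shapeParts ha, count_one_shapeParts ha'] at hones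
  omega

lemma sort_shapeParts {a : ℕ} (ha : 2 ≤ a) (k m : ℕ) :
    (shapeParts a k m).sort (· ≥ ·) =
      a :: 2 :: (replicate k 2 + replicate m 1).sort (· ≥ ·) := by
  have hle : ∀ b ∈ replicate k 2 + replicate m 1, b ≤ 2 := by
    intro b hb
    simp only [mem_add, mem_replicate] at hb
    omega
  rw [shapeParts, sort_cons, sort_cons _ _ _ hle]
  simp only [mem_cons]
  rintro b (rfl | hb)
  exacts [ha, (hle b hb).trans ha]

lemma nthPart_two_eq_two_iff {n : ℕ} (p : n.Partition) :
    nthPart p 2 = 2 ↔ ∃ a k m, 2 ≤ a ∧ p.parts = shapeParts a k m := by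
  constructor
  · intro h
    have hsorted := pairwise_sort p.parts (· ≥ ·)
    have hparts := sort_eq p.parts (· ≥ ·)
    rw [nthPart] at h
    rcases hl : p.parts.sort (· ≥ ·) with _ | ⟨a, _ | ⟨b, t⟩⟩ <;> simp only [hl] at h
    · simp at h
    · simp at h
    obtain rfl : b = 2 := h
    rw [hl, List.pairwise_cons, List.pairwise_cons] at hsorted
    rw [hl] at hparts
    have ht : ∀ x ∈ (t : Multiset ℕ), x = 2 ∨ x = 1 := by
      intro x hx
      have hpos : 0 < x := p.parts_pos (by rw [← hparts]; simp [mem_coe.mp hx])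
      have := hsorted.2.1 x (mem_coe.mp hx)
      omega
    refine ⟨a, count 2 (t : Multiset ℕ), count 1 (t : Multiset ℕ),
      hsorted.1 2 List.mem_cons_self, ?_⟩
    rw [shapeParts, ← eq_replicate_add_replicate (by decide) ht, ← hparts]
    rfl
  · rintro ⟨a, k, m, ha, hp⟩
    simp [nthPart, hp, sort_shapeParts ha]

def shapePartition (n a k : ℕ) (h : 2 ≤ a ∧ a + 2 * k + 2 ≤ n) : n.Partition where
  parts := shapeParts a k (n - (a + 2 * k + 2))
  parts_pos := by
    intro i hi
    simp only [shapeParts, mem_cons, mem_add, mem_replicate] at hi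
    omega
  parts_sum := by
    rw [sum_shapeParts]
    omega

def shapes (n : ℕ) : Finset (ℕ × ℕ) :=
  (Finset.range (n + 1) ×ˢ Finset.range (n + 1)).filter
    fun q => 2 ≤ q.1 ∧ q.1 + 2 * q.2 + 2 ≤ n

lemma mem_shapes {n : ℕ} {q : ℕ × ℕ} :
    q ∈ shapes n ↔ 2 ≤ q.1 ∧ q.1 + 2 * q.2 + 2 ≤ n := by
  simp only [shapes, Finset.mem_filter, Finset.mem_product, Finset.mem_range]
  omega

lemma f_two_eq_card_shapes (n : ℕ) : f n 2 = (shapes n).card := by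
  rw [← Nat.card_eq_finsetCard, f]
  let φ : shapes n → {p : n.Partition // nthPart p 2 = 2} := fun q =>
    ⟨shapePartition n q.1.1 q.1.2 (mem_shapes.mp q.2),
      (nthPart_two_eq_two_iff _).mpr ⟨_, _, _, (mem_shapes.mp q.2).1, rfl⟩⟩
  refine (Nat.card_eq_of_bijective φ ⟨fun q q' h => ?_, fun ⟨p, hp⟩ => ?_⟩).symm
  · obtain ⟨ha, hk, -⟩ := shapeParts_inj (mem_shapes.mp q.2).1 (mem_shapes.mp q'.2).1
      (congrArg (fun p => p.1.parts) h)
    exact Subtype.ext (Prod.ext ha hk)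
  · obtain ⟨a, k, m, ha, hp⟩ := (nthPart_two_eq_two_iff p).mp hp
    have hn : a + 2 * k + m + 2 = n := by rw [← sum_shapeParts, ← hp, p.parts_sum]
    refine ⟨⟨(a, k), mem_shapes.mpr ⟨ha, by omega⟩⟩, Subtype.ext (Nat.Partition.ext ?_)⟩
    change shapeParts a k (n - (a + 2 * k + 2)) = p.parts
    rw [hp, ← hn]
    congr 1
    omega

lemma shapes_succ (n : ℕ) :
    shapes (n + 1) =
      shapes n ∪ (Finset.range ((n - 1) / 2)).image fun k => (n - 1 - 2 * k, k) := by
  ext ⟨a, k⟩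
  simp only [Finset.mem_union, Finset.mem_image, Finset.mem_range, mem_shapes, Prod.mk.injEq]
  constructor
  · rintro ⟨ha, hn⟩
    by_cases h : a + 2 * k + 2 ≤ n
    · exact Or.inl ⟨ha, h⟩
    · exact Or.inr ⟨k, by omega, by omega, rfl⟩
  · rintro (⟨ha, hn⟩ | ⟨k, hk, rfl, rfl⟩) <;> omega

lemma card_shapes_succ (n : ℕ) : (shapes (n + 1)).card = (shapes n).card + (n - 1) / 2 := by
  rw [shapes_succ, Finset.card_union_of_disjoint, Finset.card_image_of_injective, Finset.card_range]
  · intro k k' h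
    exact (Prod.mk.inj h).2
  · rw [Finset.disjoint_right]
    simp only [Finset.mem_image, Finset.mem_range, mem_shapes]
    rintro _ ⟨k, hk, rfl⟩
    omega

lemma f_two_succ (n : ℕ) : f (n + 1) 2 = f n 2 + (n - 1) / 2 := by
  rw [f_two_eq_card_shapes, f_two_eq_card_shapes, card_shapes_succ]

/-- The column `f(n,2)` satisfies `f(n,2) = 2f(n-1,2) - 2f(n-3,2) + f(n-4,2)`
for `n ≥ 5`, with initial values `f(1,2) = f(2,2) = f(3,2) = 0` and `f(4,2) = 1`. -/
theorem column_two_recurrence :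
    f 1 2 = 0 ∧ f 2 2 = 0 ∧ f 3 2 = 0 ∧ f 4 2 = 1 ∧
      ∀ n, 5 ≤ n →
        (f n 2 : ℤ) = 2 * f (n - 1) 2 - 2 * f (n - 3) 2 + f (n - 4) 2 := by
  have h0 : f 0 2 = 0 := by rw [f_two_eq_card_shapes]; rfl
  have h1 : f 1 2 = f 0 2 := f_two_succ 0
  have h2 : f 2 2 = f 1 2 := f_two_succ 1
  have h3 : f 3 2 = f 2 2 := f_two_succ 2
  have h4 : f 4 2 = f 3 2 + 1 := f_two_succ 3
  refine ⟨by omega, by omega, by omega, by omega, fun n hn => ?_⟩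
  obtain ⟨m, rfl⟩ := Nat.exists_eq_add_of_le' hn
  have e1 : f (m + 2) 2 = f (m + 1) 2 + m / 2 := f_two_succ (m + 1)
  have e2 : f (m + 3) 2 = f (m + 2) 2 + (m + 1) / 2 := f_two_succ (m + 2)
  have e3 : f (m + 4) 2 = f (m + 3) 2 + (m + 2) / 2 := f_two_succ (m + 3)
  have e4 : f (m + 5) 2 = f (m + 4) 2 + (m + 3) / 2 := f_two_succ (m + 4)
  rw [show m + 5 - 1 = m + 4 by omega, show m + 5 - 3 = m + 2 by omega,
    show m + 5 - 4 = m + 1 by omega]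
  omega
end

section
/- The column sequence f(n,3) satisfies the linear recurrence f(n,3) = 2 f(n-1,3) + f(n-2,3) - 3 f(n-3,3) - f(n-4,3) + f(n-5,3) + 3 f(n-6,3) - f(n-7,3) - 2 f(n-8,3) + f(n-9,3) for all n ≥ 10, with initial values f(1,3) = ⋯ = f(8,3) = 0 and f(9,3) = 1. -/
/-!
A partition whose third largest part is `3` has sorted parts
`3 + s + t, 3 + t, 3, 3^u, 2^v, 1^w` for a unique tuple `(s, t, u, v, w)` of naturals, and its size
is `9 + s + 2t + 3u + 2v + w`. Hence `∑ f(n,3) Xⁿ = X⁹ / ((1 - X)² (1 - X²)² (1 - X³))`, and the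
recurrence is read off from the expansion of the denominator,
`1 - 2X - X² + 3X³ + X⁴ - X⁵ - 3X⁶ + X⁷ + 2X⁸ - X⁹`.
-/

open PowerSeries

section WeightGenFun

variable (R : Type*) [CommRing R] {β : Type*}

-- `Nat.card` is `0` on infinite fibres, hence the finiteness hypotheses below.
noncomputable def weightGenFun (wt : β → ℕ) : R⟦X⟧ :=
  mk fun n => (Nat.card {y // wt y = n} : R)

def consWeight (a : ℕ) (wt : β → ℕ) (p : ℕ × β) : ℕ := a * p.1 + wt p.2

lemma weightGenFun_add_const (wt : β → ℕ) (c : ℕ) :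
    weightGenFun R (fun y => wt y + c) = X ^ c * weightGenFun R wt := by
  ext n
  rw [coeff_X_pow_mul', weightGenFun, coeff_mk]
  split_ifs with h
  · rw [weightGenFun, coeff_mk, Nat.card_congr (Equiv.subtypeEquivRight fun y =>
      show wt y + c = n ↔ wt y = n - c by omega)]
  · have : IsEmpty {y // wt y + c = n} := ⟨fun y => h (by omega)⟩
    simp

lemma weightGenFun_id : weightGenFun R (id : ℕ → ℕ) = mk 1 := by
  ext n
  simp [weightGenFun]

lemma finite_setOf_consWeight_le {a : ℕ} (ha : 0 < a) {wt : β → ℕ}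
    (hwt : ∀ n, {y | wt y ≤ n}.Finite) (n : ℕ) : {p | consWeight a wt p ≤ n}.Finite :=
  ((Set.finite_Iic n).prod (hwt n)).subset fun p (hp : a * p.1 + wt p.2 ≤ n) =>
    ⟨show p.1 ≤ n by nlinarith, show wt p.2 ≤ n by omega⟩

def consWeightFiberEquiv (a : ℕ) (wt : β → ℕ) (n : ℕ) :
    {p // consWeight a wt p = n} ≃ {p // consWeight a wt p + a = n} ⊕ {y // wt y = n} where
  toFun
    | ⟨(0, y), h⟩ => .inr ⟨y, by simpa [consWeight] using h⟩
    | ⟨(m + 1, y), h⟩ => .inl ⟨(m, y), by simp only [consWeight] at h ⊢; linarith⟩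
  invFun
    | .inl ⟨(m, y), h⟩ => ⟨(m + 1, y), by simp only [consWeight] at h ⊢; linarith⟩
    | .inr ⟨y, h⟩ => ⟨(0, y), by simpa [consWeight] using h⟩
  left_inv := by rintro ⟨⟨_ | m, y⟩, h⟩ <;> rfl
  right_inv := by rintro (⟨⟨m, y⟩, h⟩ | ⟨y, h⟩) <;> rfl

lemma weightGenFun_consWeight {a : ℕ} (ha : 0 < a) {wt : β → ℕ}
    (hwt : ∀ n, {y | wt y ≤ n}.Finite) :
    weightGenFun R (consWeight a wt) =
      X ^ a * weightGenFun R (consWeight a wt) + weightGenFun R wt := by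
  rw [← weightGenFun_add_const]
  ext n
  have : Finite {y // wt y = n} := (hwt n).subset fun y (hy : _ = n) => hy.le
  have : Finite {p // consWeight a wt p + a = n} :=
    (finite_setOf_consWeight_le ha hwt n).subset fun p (hp : _ = n) => show _ ≤ n by omega
  simp only [weightGenFun, coeff_mk, map_add]
  rw [Nat.card_congr (consWeightFiberEquiv a wt n), Nat.card_sum, Nat.cast_add]

lemma weightGenFun_consWeight_mul_one_sub {a : ℕ} (ha : 0 < a) {wt : β → ℕ}
    (hwt : ∀ n, {y | wt y ≤ n}.Finite) :
    weightGenFun R (consWeight a wt) * (1 - X ^ a) = weightGenFun R wt := by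
  linear_combination weightGenFun_consWeight R ha hwt

end WeightGenFun

def fixedThreeList : ℕ × ℕ × ℕ × ℕ × ℕ → List ℕ
  | (s, t, u, v, w) =>
    (3 + s + t) :: (3 + t) :: 3 :: (List.replicate u 3 ++ List.replicate v 2 ++ List.replicate w 1)

/-- `tupleWeight (s, t, u, v, w) = s + 2t + 3u + 2v + w`. -/
def tupleWeight : ℕ × ℕ × ℕ × ℕ × ℕ → ℕ :=
  consWeight 1 (consWeight 2 (consWeight 3 (consWeight 2 id)))

lemma pairwise_fixedThreeList (q : ℕ × ℕ × ℕ × ℕ × ℕ) : (fixedThreeList q).Pairwise (· ≥ ·) := by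
  obtain ⟨s, t, u, v, w⟩ := q
  simp only [fixedThreeList, List.pairwise_cons, List.pairwise_append, List.pairwise_replicate,
    List.mem_cons, List.mem_append, List.mem_replicate]
  refine ⟨?_, ?_, ?_, ⟨?_, ?_, ?_⟩, ?_, ?_⟩ <;> intros <;> omega

lemma pos_of_mem_fixedThreeList {q : ℕ × ℕ × ℕ × ℕ × ℕ} {x : ℕ} (hx : x ∈ fixedThreeList q) :
    0 < x := by
  obtain ⟨s, t, u, v, w⟩ := q
  simp only [fixedThreeList, List.mem_cons, List.mem_append, List.mem_replicate] at hx
  omega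

lemma sum_fixedThreeList (q : ℕ × ℕ × ℕ × ℕ × ℕ) : (fixedThreeList q).sum = tupleWeight q + 9 := by
  obtain ⟨s, t, u, v, w⟩ := q
  simp only [fixedThreeList, tupleWeight, consWeight, List.sum_cons, List.sum_append,
    List.sum_replicate, smul_eq_mul, id_eq]
  ring

lemma fixedThreeList_injective : Function.Injective fixedThreeList := by
  rintro ⟨s, t, u, v, w⟩ ⟨s', t', u', v', w'⟩ h
  simp only [fixedThreeList, List.cons.injEq] at h
  obtain ⟨h₁, h₂, -, h₃⟩ := h
  have c₃ := congrArg (List.count 3) h₃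
  have c₂ := congrArg (List.count 2) h₃
  have c₁ := congrArg (List.count 1) h₃
  simp only [List.count_append, List.count_replicate] at c₃ c₂ c₁
  simp only [Prod.mk.injEq]
  norm_num at c₃ c₂ c₁
  omega

lemma perm_replicate_count_of_le_three {l : List ℕ} (hl : ∀ x ∈ l, 0 < x ∧ x ≤ 3) :
    l.Perm (List.replicate (l.count 3) 3 ++ List.replicate (l.count 2) 2
      ++ List.replicate (l.count 1) 1) := by
  rw [List.perm_iff_count]
  intro x
  simp only [List.count_append, List.count_replicate, beq_iff_eq]
  by_cases hx : x = 1 ∨ x = 2 ∨ x = 3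
  · rcases hx with rfl | rfl | rfl <;> simp
  · rw [List.count_eq_zero.mpr fun hmem => hx (by have := hl x hmem; omega)]
    split_ifs <;> omega

lemma exists_perm_fixedThreeList {l : List ℕ} (hl : l.Pairwise (· ≥ ·)) (hpos : ∀ x ∈ l, 0 < x)
    (h₃ : l.getD 2 0 = 3) : ∃ q, l.Perm (fixedThreeList q) := by
  obtain ⟨a, b, c, rest, rfl⟩ : ∃ a b c rest, l = a :: b :: c :: rest := by
    match l, h₃ with
    | a :: b :: c :: rest, _ => exact ⟨a, b, c, rest, rfl⟩
  obtain rfl : c = 3 := h₃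
  simp only [List.pairwise_cons, List.mem_cons, forall_eq_or_imp] at hl
  obtain ⟨⟨hab, -, -⟩, ⟨hb, -⟩, hrest, -⟩ := hl
  refine ⟨(a - b, b - 3, rest.count 3, rest.count 2, rest.count 1), ?_⟩
  rw [fixedThreeList, show 3 + (a - b) + (b - 3) = a by omega, show 3 + (b - 3) = b by omega]
  exact .cons _ <| .cons _ <| .cons _ <| perm_replicate_count_of_le_three fun x hx =>
    ⟨hpos x (by simp [hx]), hrest x hx⟩

lemma nthPart_three_of_parts_eq {n : ℕ} {p : n.Partition} {q : ℕ × ℕ × ℕ × ℕ × ℕ}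
    (hp : p.parts = fixedThreeList q) : nthPart p 3 = 3 := by
  rw [nthPart, hp, Multiset.coe_sort, List.mergeSort_eq_self _ (pairwise_fixedThreeList q)]
  rfl

lemma f_three_eq_card (n : ℕ) : f n 3 = Nat.card {q // tupleWeight q + 9 = n} := by
  symm
  refine Nat.card_eq_of_bijective (fun q => ⟨⟨fixedThreeList q.1, pos_of_mem_fixedThreeList,
    by rw [Multiset.sum_coe, sum_fixedThreeList, q.2]⟩, nthPart_three_of_parts_eq rfl⟩) ⟨?_, ?_⟩
  · intro q q' h
    exact Subtype.ext <| fixedThreeList_injective <|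
      (Multiset.coe_eq_coe.mp (congrArg (·.1.parts) h)).eq_of_pairwise'
        (pairwise_fixedThreeList _) (pairwise_fixedThreeList _)
  · rintro ⟨p, hp⟩
    obtain ⟨q, hq⟩ := exists_perm_fixedThreeList (Multiset.pairwise_sort p.parts (· ≥ ·))
      (fun x hx => p.parts_pos ((Multiset.mem_sort _).mp hx)) hp
    have hparts : p.parts = fixedThreeList q := by
      rw [← Multiset.sort_eq p.parts (· ≥ ·)]
      exact Multiset.coe_eq_coe.mpr hq
    refine ⟨⟨q, ?_⟩, Subtype.ext (Nat.Partition.ext hparts.symm)⟩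
    rw [← sum_fixedThreeList, ← Multiset.sum_coe, ← hparts, p.parts_sum]

lemma weightGenFun_tupleWeight_mul (R : Type*) [CommRing R] :
    weightGenFun R tupleWeight * ((1 - X) ^ 2 * (1 - X ^ 2) ^ 2 * (1 - X ^ 3)) = 1 := by
  have h₀ : ∀ n, {y : ℕ | id y ≤ n}.Finite := Set.finite_Iic
  have h₁ := finite_setOf_consWeight_le two_pos h₀
  have h₂ := finite_setOf_consWeight_le three_pos h₁
  have h₃ := finite_setOf_consWeight_le two_pos h₂
  calc _ = weightGenFun R tupleWeight * (1 - X ^ 1) * (1 - X ^ 2) * (1 - X ^ 3) * (1 - X ^ 2)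
        * (1 - X) := by ring
    _ = 1 := by
      rw [tupleWeight, weightGenFun_consWeight_mul_one_sub R one_pos h₃,
        weightGenFun_consWeight_mul_one_sub R two_pos h₂,
        weightGenFun_consWeight_mul_one_sub R three_pos h₁,
        weightGenFun_consWeight_mul_one_sub R two_pos h₀, weightGenFun_id,
        mk_one_mul_one_sub_eq_one]

lemma coeff_mul_column_three_denominator {R : Type*} [CommRing R] (F : R⟦X⟧) {n : ℕ}
    (hn : 9 ≤ n) :
    coeff n (F * ((1 - X) ^ 2 * (1 - X ^ 2) ^ 2 * (1 - X ^ 3))) =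
      coeff n F - 2 * coeff (n - 1) F - coeff (n - 2) F + 3 * coeff (n - 3) F + coeff (n - 4) F
        - coeff (n - 5) F - 3 * coeff (n - 6) F + coeff (n - 7) F + 2 * coeff (n - 8) F
        - coeff (n - 9) F := by
  have hD : ((1 - X) ^ 2 * (1 - X ^ 2) ^ 2 * (1 - X ^ 3) : R⟦X⟧) = 1 - (2 : ℤ) • X ^ 1 - X ^ 2
      + (3 : ℤ) • X ^ 3 + X ^ 4 - X ^ 5 - (3 : ℤ) • X ^ 6 + X ^ 7 + (2 : ℤ) • X ^ 8 - X ^ 9 := by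
    simp only [zsmul_eq_mul]; ring
  simp only [hD, mul_sub, mul_add, mul_one, mul_smul_comm, map_add, map_sub, map_zsmul,
    coeff_mul_X_pow', show 1 ≤ n by omega, show 2 ≤ n by omega, show 3 ≤ n by omega,
    show 4 ≤ n by omega, show 5 ≤ n by omega, show 6 ≤ n by omega, show 7 ≤ n by omega,
    show 8 ≤ n by omega, hn, if_true]
  simp only [zsmul_eq_mul, Int.cast_ofNat]

lemma mk_f_three_eq_X_pow_mul :
    (mk fun n => (f n 3 : ℤ)) = X ^ 9 * weightGenFun ℤ tupleWeight := by
  rw [← weightGenFun_add_const ℤ]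
  ext n
  simp only [coeff_mk, weightGenFun, f_three_eq_card]

/-- The column `f(n,3)` satisfies a degree-9 linear recurrence for `n ≥ 10`, with
initial values `f(1,3) = ⋯ = f(8,3) = 0` and `f(9,3) = 1`. -/
theorem column_three_recurrence :
    (∀ n, 1 ≤ n → n ≤ 8 → f n 3 = 0) ∧ f 9 3 = 1 ∧
      ∀ n, 10 ≤ n →
        (f n 3 : ℤ) = 2 * f (n - 1) 3 + f (n - 2) 3 - 3 * f (n - 3) 3 - f (n - 4) 3
          + f (n - 5) 3 + 3 * f (n - 6) 3 - f (n - 7) 3 - 2 * f (n - 8) 3 + f (n - 9) 3 := by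
  have hf (n : ℕ) : (f n 3 : ℤ) = coeff n (X ^ 9 * weightGenFun ℤ tupleWeight) := by
    rw [← mk_f_three_eq_X_pow_mul, coeff_mk]
  have hG₀ : constantCoeff (weightGenFun ℤ tupleWeight) = 1 := by
    simpa using congrArg constantCoeff (weightGenFun_tupleWeight_mul ℤ)
  refine ⟨fun n _ hn => ?_, ?_, fun n hn => ?_⟩
  · have := hf n
    rw [coeff_X_pow_mul', if_neg (by omega)] at this
    exact_mod_cast this
  · have := hf 9
    rw [coeff_X_pow_mul', if_pos le_rfl, Nat.sub_self, coeff_zero_eq_constantCoeff_apply,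
      hG₀] at this
    exact_mod_cast this
  · have := congrArg (coeff n) (congrArg (X ^ 9 * ·) (weightGenFun_tupleWeight_mul ℤ))
    rw [← mul_assoc, coeff_mul_column_three_denominator _ (by omega), mul_one, coeff_X_pow,
      if_neg (by omega)] at this
    simp only [← hf] at this
    linarith
end

section
/- Conjugation gives a bijection between the partitions λ of n whose Durfee square has size d and which have no part equal to d, and the partitions μ of n with μ_d = μ_{d+1} = d (the d-th and (d+1)-st largest parts both equal d). In particular, for each fixed d ≥ 1 and n ≥ 1 these two sets of partitions of n are equinumerous. -/
def countGe (s : Multiset ℕ) (i : ℕ) : ℕ := s.countP (i ≤ ·)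

lemma countGe_eq_countGe_succ_add_count (s : Multiset ℕ) (a : ℕ) :
    countGe s a = countGe s (a + 1) + s.count a := by
  induction s using Multiset.induction with
  | empty => simp [countGe]
  | cons b s ih =>
    simp only [countGe, Multiset.countP_cons, Multiset.count_cons] at ih ⊢
    split_ifs <;> omega

lemma le_getD_iff_lt_countP {k : ℕ} (hk : 0 < k) {L : List ℕ} (hL : L.Pairwise (· ≥ ·))
    (j : ℕ) : k ≤ L.getD j 0 ↔ j < L.countP (k ≤ ·) := by
  induction L generalizing j with
  | nil => simp; omega
  | cons a t ih =>
    obtain ⟨ha, ht⟩ := List.pairwise_cons.mp hL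
    by_cases hka : k ≤ a
    · cases j with
      | zero => simp [hka]
      | succ j => rw [List.getD_cons_succ, List.countP_cons, ih ht j]; simp [hka]
    · have ht0 : t.countP (k ≤ ·) = 0 :=
        List.countP_eq_zero.mpr fun x hx => by have := ha x hx; simp; omega
      cases j with
      | zero => simp only [List.getD_cons_zero, List.countP_cons, ht0]; simp [hka]
      | succ j => simpa [List.getD_cons_succ, List.countP_cons, hka, ht0] using ih ht j

lemma eq_of_countGe_eq {s t : Multiset ℕ} (hs : 0 ∉ s) (ht : 0 ∉ t)
    (h : ∀ k, 0 < k → countGe s k = countGe t k) : s = t := by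
  ext a
  obtain rfl | ha := Nat.eq_zero_or_pos a
  · rw [Multiset.count_eq_zero.mpr hs, Multiset.count_eq_zero.mpr ht]
  · have := countGe_eq_countGe_succ_add_count s a
    have := countGe_eq_countGe_succ_add_count t a
    have := h a ha
    have := h (a + 1) a.succ_pos
    omega

lemma sum_countGe_Icc {s : Multiset ℕ} {n : ℕ} (hs : ∀ x ∈ s, x ≤ n) :
    ∑ i ∈ Finset.Icc 1 n, countGe s i = s.sum := by
  induction s using Multiset.induction with
  | empty => simp [countGe]
  | cons a s ih =>
    have ha := hs a (s.mem_cons_self a)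
    have hIcc : (Finset.Icc 1 n).filter (· ≤ a) = Finset.Icc 1 a := by
      ext i; simp only [Finset.mem_Icc, Finset.mem_filter]; omega
    simp only [countGe, Multiset.countP_cons] at ih ⊢
    rw [Finset.sum_add_distrib, ih fun x hx => hs x (Multiset.mem_cons_of_mem hx),
      Finset.sum_boole, hIcc, Nat.card_Icc, Nat.add_sub_cancel, Nat.cast_id, Multiset.sum_cons,
      add_comm a]

lemma eq_of_forall_pos_le_iff {a b : ℕ} (h : ∀ k, 0 < k → (k ≤ a ↔ k ≤ b)) : a = b :=
  eq_of_forall_le_iff fun k => by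
    obtain rfl | hk := Nat.eq_zero_or_pos k
    · simp
    · exact h k hk

lemma Nat.sSup_eq_iff_of_isLowerSet {S : Set ℕ} (hS : IsLowerSet S) (hne : S.Nonempty)
    (hbdd : BddAbove S) (d : ℕ) : sSup S = d ↔ d ∈ S ∧ d + 1 ∉ S := by
  constructor
  · rintro rfl
    exact ⟨Nat.sSup_mem hne hbdd, fun h => (le_csSup hbdd h).not_gt (Nat.lt_succ_self _)⟩
  · rintro ⟨hd, hd1⟩
    refine le_antisymm (csSup_le hne fun i hi => ?_) (le_csSup hbdd hd)
    by_contra! h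
    exact hd1 (hS h hi)

section nthPart

variable {n : ℕ} (q : n.Partition)

lemma le_nthPart_iff_s18 {i k : ℕ} (hi : 0 < i) (hk : 0 < k) :
    k ≤ nthPart q i ↔ i ≤ countGe q.parts k := by
  rw [nthPart, le_getD_iff_lt_countP hk (Multiset.pairwise_sort _ _)]
  conv_rhs => rw [countGe, ← Multiset.sort_eq q.parts (· ≥ ·), Multiset.coe_countP]
  omega

lemma nthPart_le (i : ℕ) : nthPart q i ≤ n := by
  rw [nthPart, List.getD_eq_getElem?_getD]
  cases h : (q.parts.sort (· ≥ ·))[i - 1]? with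
  | none => exact Nat.zero_le n
  | some x =>
    exact Nat.Partition.le_of_mem_parts ((Multiset.mem_sort _).mp (List.mem_of_getElem? h))

lemma durfee_eq_iff (d : ℕ) : durfee q = d ↔ d ≤ nthPart q d ∧ nthPart q (d + 1) < d + 1 := by
  have hlower : IsLowerSet {i : ℕ | i ≤ nthPart q i} := by
    intro i j hji hi
    obtain rfl | hj := Nat.eq_zero_or_pos j
    · exact Nat.zero_le _
    have hi' : 0 < i := hj.trans_le hji
    exact (le_nthPart_iff_s18 q hj hj).mpr <|
      hji.trans <| (le_nthPart_iff_s18 q hi' hj).mp (hji.trans hi)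
  rw [durfee, Nat.sSup_eq_iff_of_isLowerSet hlower ⟨0, Nat.zero_le _⟩
    ⟨n, fun i hi => le_trans hi (nthPart_le q i)⟩]
  simp only [Set.mem_ofPred_eq, not_le]

lemma durfee_eq_and_notMem_parts_iff {d : ℕ} (hd : 0 < d) :
    durfee q = d ∧ d ∉ q.parts ↔ countGe q.parts d = d ∧ countGe q.parts (d + 1) = d := by
  rw [durfee_eq_iff, ← Nat.not_le, le_nthPart_iff_s18 q hd hd,
    le_nthPart_iff_s18 q (by omega : 0 < d + 1) (by omega : 0 < d + 1), ← Multiset.count_eq_zero]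
  have := countGe_eq_countGe_succ_add_count q.parts d
  omega

end nthPart

namespace Nat.Partition

variable {n : ℕ}

def conjugate (q : n.Partition) : n.Partition :=
  ofSums n ((Finset.Icc 1 n).val.map (countGe q.parts)) <| by
    rw [← Finset.sum_eq_multiset_sum, sum_countGe_Icc fun _ => le_of_mem_parts, q.parts_sum]

lemma countGe_conjugate_parts (q : n.Partition) {k : ℕ} (hk : 0 < k) :
    countGe q.conjugate.parts k = nthPart q k := by
  have hIcc : (Finset.Icc 1 n).filter (k ≤ countGe q.parts ·) = Finset.Icc 1 (nthPart q k) := by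
    ext i
    simp only [Finset.mem_filter, Finset.mem_Icc]
    have := nthPart_le q k
    constructor
    · rintro ⟨⟨hi, -⟩, hki⟩
      exact ⟨hi, (le_nthPart_iff_s18 q hk hi).mpr hki⟩
    · rintro ⟨hi, hik⟩
      exact ⟨⟨hi, hik.trans this⟩, (le_nthPart_iff_s18 q hk hi).mp hik⟩
  -- `ofSums` drops the zero entries `λ'_i`, `i > λ_1`; they never count towards `λ'_k` as `k > 0`.
  have hpos : ∀ x, k ≤ x ∧ x ≠ 0 ↔ k ≤ x := fun x => ⟨And.left, fun h => ⟨h, by omega⟩⟩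
  rw [countGe, conjugate, ofSums, Multiset.countP_filter]
  simp only [hpos, Multiset.countP_map]
  rw [← Finset.filter_val, ← Finset.card_def, hIcc, Nat.card_Icc, Nat.add_sub_cancel]

lemma nthPart_conjugate (q : n.Partition) {i : ℕ} (hi : 0 < i) :
    nthPart q.conjugate i = countGe q.parts i :=
  eq_of_forall_pos_le_iff fun k hk => by
    rw [le_nthPart_iff_s18 _ hi hk, countGe_conjugate_parts q hk, le_nthPart_iff_s18 q hk hi]

lemma conjugate_involutive : Function.Involutive (conjugate (n := n)) := fun q =>
  Nat.Partition.ext <| eq_of_countGe_eq (fun h => (parts_pos _ h).false)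
    (fun h => (parts_pos _ h).false) fun k hk => by
      rw [countGe_conjugate_parts _ hk, nthPart_conjugate q hk]

end Nat.Partition

theorem conjugation_bijection_general (n d : ℕ) (hd : 1 ≤ d) :
    ∃ e : {l : n.Partition // durfee l = d ∧ d ∉ l.parts} ≃
        {m : n.Partition // nthPart m d = d ∧ nthPart m (d + 1) = d},
      ∀ l : {l : n.Partition // durfee l = d ∧ d ∉ l.parts}, ∀ i, 1 ≤ i →
        nthPart (e l).1 i = Multiset.card ((l.1.parts).filter (fun x => i ≤ x)) := by
  refine ⟨Nat.Partition.conjugate_involutive.toPerm.subtypeEquiv fun l => ?_, fun l i hi => ?_⟩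
  · simp only [Function.Involutive.coe_toPerm]
    rw [durfee_eq_and_notMem_parts_iff l hd, l.nthPart_conjugate hd, l.nthPart_conjugate (by omega)]
  · simp only [Equiv.subtypeEquiv_apply, Function.Involutive.coe_toPerm]
    rw [l.1.nthPart_conjugate hi, countGe, Multiset.countP_eq_card_filter]

/-- Conjugation is a bijection between partitions `λ` of `n` whose Durfee square has
size `d` and which have no part equal to `d`, and partitions `μ` of `n` with
`μ_d = μ_{d+1} = d`.  The bijection `e` is conjugation: the `i`-th largest part of
`e λ` is the number of parts of `λ` that are at least `i`.  In particular the two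
sets are equinumerous. -/
theorem conjugation_bijection (n d : ℕ) (hd : 1 ≤ d) (hn : 1 ≤ n) :
    ∃ e : {l : n.Partition // durfee l = d ∧ d ∉ l.parts} ≃
        {m : n.Partition // nthPart m d = d ∧ nthPart m (d + 1) = d},
      ∀ l : {l : n.Partition // durfee l = d ∧ d ∉ l.parts}, ∀ i, 1 ≤ i →
        nthPart (e l).1 i = Multiset.card ((l.1.parts).filter (fun x => i ≤ x)) :=
  conjugation_bijection_general n d hd
end
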